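/- arXiv:1801.03562 — 5 statements merged into one kernel-verified Lean document; each statement's English description precedes it below -/
import Mathlib

section
/- At every grid point x, the gradient of Q vanishes: ∇Q(x) = 0. -/
open scoped BigOperators

noncomputable def Q (F R : ℕ) (y : EuclideanSpace ℝ (Fin F × Fin R)) : ℝ :=
  -(1/2) * ∑ r : Fin R,
    ((∑ φ : Fin F, (y (φ, r))^2 - 1)^2 + ∑ φ : Fin F, (y (φ, r))^2 * (1 - y (φ, r))^2)

def IsGridPoint (F R : ℕ) (x : EuclideanSpace ℝ (Fin F × Fin R)) : Prop :=
  ∀ r : Fin R, ∃! φ : Fin F, x (φ, r) = 1 ∧ ∀ φ' : Fin F, φ' ≠ φ → x (φ', r) = 0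

/-! Each summand of `Q` is the square of a polynomial that vanishes at a grid point,
namely `∑ φ, y (φ, r) ^ 2 - 1` or `y (φ, r) * (1 - y (φ, r))`, and the square of a
differentiable function has zero derivative at any of its zeros. -/

theorem hasFDerivAt_sq_zero_of_eq_zero {E : Type*} [NormedAddCommGroup E] [NormedSpace ℝ E]
    {f : E → ℝ} {x : E} (hf : DifferentiableAt ℝ f x) (hfx : f x = 0) :
    HasFDerivAt (fun y => f y ^ 2) (0 : E →L[ℝ] ℝ) x := by
  simpa [hfx] using hf.hasFDerivAt.pow 2

namespace IsGridPoint

variable {F R : ℕ} {x : EuclideanSpace ℝ (Fin F × Fin R)}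

theorem exists_apply_eq_ite (hx : IsGridPoint F R x) (r : Fin R) :
    ∃ φ₀, ∀ φ, x (φ, r) = if φ = φ₀ then 1 else 0 := by
  obtain ⟨φ₀, ⟨h_one, h_zero⟩, -⟩ := hx r
  refine ⟨φ₀, fun φ => ?_⟩
  split_ifs with h
  · rwa [h]
  · exact h_zero φ h

theorem sum_sq_col (hx : IsGridPoint F R x) (r : Fin R) : ∑ φ, x (φ, r) ^ 2 = 1 := by
  obtain ⟨φ₀, hcol⟩ := hx.exists_apply_eq_ite r
  simp [hcol]

theorem mul_one_sub_apply (hx : IsGridPoint F R x) (φ : Fin F) (r : Fin R) :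
    x (φ, r) * (1 - x (φ, r)) = 0 := by
  obtain ⟨φ₀, hcol⟩ := hx.exists_apply_eq_ite r
  rw [hcol]
  split_ifs <;> norm_num

end IsGridPoint

theorem stmt_5_general (F R : ℕ)
    (x : EuclideanSpace ℝ (Fin F × Fin R)) (hx : IsGridPoint F R x) :
    gradient (Q F R) x = 0 := by
  have hsummand (r : Fin R) : HasFDerivAt (fun y : EuclideanSpace ℝ (Fin F × Fin R) =>
      (∑ φ, y (φ, r) ^ 2 - 1) ^ 2 + ∑ φ, (y (φ, r) * (1 - y (φ, r))) ^ 2)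
      (0 : EuclideanSpace ℝ (Fin F × Fin R) →L[ℝ] ℝ) x := by
    have hnorm := hasFDerivAt_sq_zero_of_eq_zero
      (f := fun y : EuclideanSpace ℝ (Fin F × Fin R) => ∑ φ, y (φ, r) ^ 2 - 1)
      (by fun_prop) (sub_eq_zero.2 (hx.sum_sq_col r))
    have hbin (φ : Fin F) := hasFDerivAt_sq_zero_of_eq_zero
      (f := fun y : EuclideanSpace ℝ (Fin F × Fin R) => y (φ, r) * (1 - y (φ, r)))
      (by fun_prop) (hx.mul_one_sub_apply φ r)
    simpa using hnorm.fun_add (HasFDerivAt.fun_sum fun φ _ => hbin φ)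
  have hQ : HasFDerivAt (Q F R) (0 : EuclideanSpace ℝ (Fin F × Fin R) →L[ℝ] ℝ) x := by
    unfold Q
    simp_rw [← mul_pow]
    simpa using (HasFDerivAt.fun_sum fun r _ => hsummand r).const_mul (-(1 / 2) : ℝ)
  simp [gradient, hQ.fderiv]

theorem stmt_5 (F R : ℕ) (hF : 0 < F) (hR : 0 < R)
    (x : EuclideanSpace ℝ (Fin F × Fin R)) (hx : IsGridPoint F R x) :
    gradient (Q F R) x = 0 :=
  stmt_5_general F R x hx
end

section
/- At every grid point x, the Hessian of Q is diagonal with entries [∇²Q(x)]_{(φ'r'),(φr)} = -δ_{rr'} δ_{φφ'} (1 + 4 x_{φr}²); in particular the Hessian at a grid point is negative definite, with diagonal entries equal to -5 where x_{φr} = 1 and -1 where x_{φr} = 0. -/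
/-! The gradient of `Q` has coordinates
`∂Q/∂y_{φr} = -2 (S_r - 1) y_{φr} - y_{φr} (1 - y_{φr}) (1 - 2 y_{φr})` with
`S_r = Σ_φ y_{φr}²`, and differentiating once more gives the Hessian in closed form. At a grid
point `S_r = 1` and every coordinate is `0` or `1`, so `1 - 6t + 6t² = 1`, and the rank-one term
`4 ⟨y_r, v_r⟩ y_{φr}` only sees the entry equal to `1`: the Hessian collapses to the diagonal
form `-Σ_p (1 + 4 x_p²) v_p w_p`. -/

open scoped BigOperators

/-- The Hessian of `Q` at `x`, as a bilinear form evaluated on a pair of vectors. -/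
noncomputable def hess (F R : ℕ) (x v w : EuclideanSpace ℝ (Fin F × Fin R)) : ℝ :=
  iteratedFDeriv ℝ 2 (Q F R) x ![v, w]

theorem iteratedFDeriv_two_apply_of_hasFDerivAt {𝕜 E G : Type*} [NontriviallyNormedField 𝕜]
    [NormedAddCommGroup E] [NormedSpace 𝕜 E] [NormedAddCommGroup G] [NormedSpace 𝕜 G]
    {f : E → G} {f' : E → E →L[𝕜] G} {f'' : E →L[𝕜] E →L[𝕜] G} {x : E}
    (hf : ∀ y, HasFDerivAt f (f' y) y) (hf' : HasFDerivAt f' f'' x) (v w : E) :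
    iteratedFDeriv 𝕜 2 f x ![v, w] = f'' v w := by
  rw [iteratedFDeriv_two_apply, funext fun y => (hf y).fderiv, hf'.fderiv]
  rfl

lemma IsGridPoint.exists_eq_ite {F R : ℕ} {x : EuclideanSpace ℝ (Fin F × Fin R)}
    (hx : IsGridPoint F R x) :
    ∃ σ : Fin R → Fin F, ∀ p, x p = if p.1 = σ p.2 then 1 else 0 := by
  choose σ hσ using fun r => (hx r).exists
  refine ⟨σ, fun ⟨φ, r⟩ => ?_⟩
  split_ifs with h
  · obtain rfl : φ = σ r := h
    exact (hσ r).1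
  · exact (hσ r).2 φ h

namespace Q

variable {F R : ℕ}

def colInner (r : Fin R) (y v : EuclideanSpace ℝ (Fin F × Fin R)) : ℝ :=
  ∑ φ, y (φ, r) * v (φ, r)

def gradCoeff (p : Fin F × Fin R) (y : EuclideanSpace ℝ (Fin F × Fin R)) : ℝ :=
  -2 * (colInner p.2 y y - 1) * y p - y p * (1 - y p) * (1 - 2 * y p)

lemma hasFDerivAt_Q (y : EuclideanSpace ℝ (Fin F × Fin R)) :
    HasFDerivAt (Q F R) (∑ p, gradCoeff p y • EuclideanSpace.proj (𝕜 := ℝ) p) y := by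
  have hcoord (q : Fin F × Fin R) := PiLp.hasFDerivAt_apply (𝕜 := ℝ) 2 y q
  have hQ := (HasFDerivAt.fun_sum fun r (_ : r ∈ Finset.univ) =>
    (((HasFDerivAt.fun_sum fun φ (_ : φ ∈ Finset.univ) =>
      (hcoord (φ, r)).pow 2).sub_const 1).pow 2).add
    (HasFDerivAt.fun_sum fun φ (_ : φ ∈ Finset.univ) =>
      ((hcoord (φ, r)).pow 2).mul (((hasFDerivAt_const 1 y).sub (hcoord (φ, r))).pow 2)))
  refine (hQ.const_mul (-(1 / 2) : ℝ)).congr_fderiv ?_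
  ext v
  simp only [one_div, Nat.add_one_sub_one, pow_one, nsmul_eq_mul, Nat.cast_ofNat, Pi.sub_apply,
    zero_sub, smul_neg, neg_smul, neg_apply, smul_apply, sum_apply, add_apply, PiLp.proj_apply,
    smul_eq_mul, gradCoeff, colInner, Fintype.sum_prod_type_right]
  simp only [Finset.mul_sum, ← Finset.sum_add_distrib, ← Finset.sum_neg_distrib]
  refine Finset.sum_congr rfl fun r _ => Finset.sum_congr rfl fun φ _ => ?_
  simp only [sq]
  ring

lemma hasFDerivAt_gradCoeff (p : Fin F × Fin R) (y : EuclideanSpace ℝ (Fin F × Fin R)) :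
    HasFDerivAt (gradCoeff p)
      (-(4 * y p) • ∑ φ, y (φ, p.2) • EuclideanSpace.proj (φ, p.2) -
        (2 * (colInner p.2 y y - 1) + 1 - 6 * y p + 6 * y p ^ 2) •
          EuclideanSpace.proj (𝕜 := ℝ) p) y := by
  have hcoord (q : Fin F × Fin R) := PiLp.hasFDerivAt_apply (𝕜 := ℝ) 2 y q
  have hc := ((((HasFDerivAt.fun_sum fun φ (_ : φ ∈ Finset.univ) =>
    (hcoord (φ, p.2)).mul (hcoord (φ, p.2))).sub_const 1).const_mul (-2)).mul (hcoord p)).sub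
    (((hcoord p).mul ((hasFDerivAt_const 1 y).sub (hcoord p))).mul
      ((hasFDerivAt_const 1 y).sub ((hcoord p).const_mul 2)))
  refine hc.congr_fderiv ?_
  ext v
  simp only [Pi.mul_apply, neg_mul, neg_smul, smul_neg, Pi.sub_apply, zero_sub, smul_add, sub_apply,
    add_apply, neg_apply, smul_apply, PiLp.proj_apply, smul_eq_mul, sum_apply, colInner,
    Finset.sum_add_distrib]
  ring

lemma hess_apply (y v w : EuclideanSpace ℝ (Fin F × Fin R)) :
    hess F R y v w = -∑ p, (4 * y p * colInner p.2 y v +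
      (2 * (colInner p.2 y y - 1) + 1 - 6 * y p + 6 * y p ^ 2) * v p) * w p := by
  rw [hess, iteratedFDeriv_two_apply_of_hasFDerivAt hasFDerivAt_Q
    (HasFDerivAt.fun_sum fun p (_ : p ∈ Finset.univ) =>
      (hasFDerivAt_gradCoeff p y).smul_const (EuclideanSpace.proj (𝕜 := ℝ) p))]
  simp only [neg_smul, sum_apply, ContinuousLinearMap.smulRight_apply, sub_apply, neg_apply,
    smul_apply, PiLp.proj_apply, smul_eq_mul, ← Finset.sum_neg_distrib]
  exact Finset.sum_congr rfl fun p _ => by simp only [colInner]; ring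

lemma hess_of_isGridPoint {x : EuclideanSpace ℝ (Fin F × Fin R)} (hx : IsGridPoint F R x)
    (v w : EuclideanSpace ℝ (Fin F × Fin R)) :
    hess F R x v w = -∑ p, (1 + 4 * x p ^ 2) * v p * w p := by
  obtain ⟨σ, hσ⟩ := hx.exists_eq_ite
  have hcol (r : Fin R) (v : EuclideanSpace ℝ (Fin F × Fin R)) :
      colInner r x v = v (σ r, r) := by
    simp [colInner, hσ]
  rw [hess_apply]
  refine congrArg Neg.neg (Finset.sum_congr rfl fun ⟨φ, r⟩ _ => ?_)
  simp only [hcol, hσ]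
  split_ifs with h
  · subst h; ring
  · ring

end Q

lemma EuclideanSpace.sum_mul_mul_self_pos {ι : Type*} [Fintype ι] {a : ι → ℝ} (ha : ∀ i, 0 < a i)
    {v : EuclideanSpace ℝ ι} (hv : v ≠ 0) : 0 < ∑ i, a i * v i * v i := by
  obtain ⟨i, hi⟩ : ∃ i, v i ≠ 0 := by
    by_contra! h
    exact hv (PiLp.ext h)
  refine Finset.sum_pos' (fun j _ => ?_) ⟨i, Finset.mem_univ i, ?_⟩
  · rw [mul_assoc]; exact mul_nonneg (ha j).le (mul_self_nonneg _)
  · rw [mul_assoc]; exact mul_pos (ha i) (mul_self_pos.mpr hi)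

theorem stmt_6_general (F R : ℕ)
    (x : EuclideanSpace ℝ (Fin F × Fin R)) (hx : IsGridPoint F R x) :
    (∀ p p' : Fin F × Fin R,
      hess F R x (EuclideanSpace.single p' 1) (EuclideanSpace.single p 1) =
        (if p' = p then -(1 + 4 * (x p)^2) else 0)) ∧
    (∀ v : EuclideanSpace ℝ (Fin F × Fin R), v ≠ 0 → hess F R x v v < 0) ∧
    (∀ p : Fin F × Fin R, x p = 1 →
      hess F R x (EuclideanSpace.single p 1) (EuclideanSpace.single p 1) = -5) ∧
    (∀ p : Fin F × Fin R, x p = 0 →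
      hess F R x (EuclideanSpace.single p 1) (EuclideanSpace.single p 1) = -1) := by
  have hsingle (p p' : Fin F × Fin R) :
      hess F R x (EuclideanSpace.single p' 1) (EuclideanSpace.single p 1) =
        if p' = p then -(1 + 4 * x p ^ 2) else 0 := by
    rw [Q.hess_of_isGridPoint hx]
    simp only [PiLp.single_apply, mul_ite, mul_one, mul_zero, Finset.sum_ite_eq',
      Finset.mem_univ, if_true, eq_comm (a := p)]
    rw [apply_ite Neg.neg, neg_zero]
  refine ⟨hsingle, fun v hv => ?_, fun p hp => ?_, fun p hp => ?_⟩
  · rw [Q.hess_of_isGridPoint hx, neg_lt_zero]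
    exact EuclideanSpace.sum_mul_mul_self_pos (fun p => by positivity) hv
  · rw [hsingle, if_pos rfl, hp]; norm_num
  · rw [hsingle, if_pos rfl, hp]; norm_num

theorem stmt_6 (F R : ℕ) (hF : 0 < F) (hR : 0 < R)
    (x : EuclideanSpace ℝ (Fin F × Fin R)) (hx : IsGridPoint F R x) :
    (∀ p p' : Fin F × Fin R,
      hess F R x (EuclideanSpace.single p' 1) (EuclideanSpace.single p 1) =
        (if p' = p then -(1 + 4 * (x p)^2) else 0)) ∧
    (∀ v : EuclideanSpace ℝ (Fin F × Fin R), v ≠ 0 → hess F R x v v < 0) ∧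
    (∀ p : Fin F × Fin R, x p = 1 →
      hess F R x (EuclideanSpace.single p 1) (EuclideanSpace.single p 1) = -5) ∧
    (∀ p : Fin F × Fin R, x p = 0 →
      hess F R x (EuclideanSpace.single p 1) (EuclideanSpace.single p 1) = -1) :=
  stmt_6_general F R x hx
end

section
/- For every y ∈ ℝ^{F×R}, the inner product of the gradient of Q with y satisfies ∇Q(y)·y ≤ (17/8)‖y‖², where ‖·‖ is the Euclidean norm. -/
open scoped BigOperators RealInnerProductSpace

/-!
`⟪∇Q(y), y⟫` is the derivative at `t = 1` of `t ↦ Q(t • y)`, which splits over the columns `r`.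
With `s = ∑ φ, y (φ, r) ^ 2`, column `r` contributes `-2 s (s - 1) - ∑ φ, y² (1 - y) (1 - 2 y)`.
Each entry term is at most `y² / 8`, because `y² / 8 + y² (1 - y) (1 - 2 y) = 2 (y (y - 3/4))²`,
so the column contributes at most `-2 s² + 17 s / 8 ≤ 17 s / 8`.
-/

theorem fderiv_apply_self_eq_of_hasDerivAt_smul {E : Type*} [NormedAddCommGroup E]
    [NormedSpace ℝ E] {f : E → ℝ} {x : E} {d : ℝ} (hf : DifferentiableAt ℝ f x)
    (hd : HasDerivAt (fun t : ℝ => f (t • x)) d 1) : fderiv ℝ f x x = d := by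
  have hline : HasDerivAt (fun t : ℝ => t • x) x 1 := by
    simpa using (hasDerivAt_id (1 : ℝ)).smul_const x
  have hf' : HasFDerivAt f (fderiv ℝ f x) ((1 : ℝ) • x) := by
    rw [one_smul]; exact hf.hasFDerivAt
  exact (hf'.comp_hasDerivAt 1 hline).unique hd

theorem hasDerivAt_mul_sq_mul_one_sub_mul_sq (x : ℝ) :
    HasDerivAt (fun t : ℝ => (t * x) ^ 2 * (1 - t * x) ^ 2)
      (2 * x ^ 2 * (1 - x) * (1 - 2 * x)) 1 := by
  have hline := hasDerivAt_mul_const (x := (1 : ℝ)) x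
  refine ((hline.fun_pow 2).fun_mul ((hline.const_sub 1).fun_pow 2)).congr_deriv ?_
  push_cast; ring

theorem neg_sq_mul_one_sub_mul_one_sub_two_mul_le (x : ℝ) :
    -(x ^ 2 * (1 - x) * (1 - 2 * x)) ≤ x ^ 2 / 8 := by
  nlinarith [sq_nonneg (x * (x - 3 / 4))]

section Column

variable {ι : Type*} [Fintype ι] (a : ι → ℝ)

theorem hasDerivAt_sum_mul_sq :
    HasDerivAt (fun t : ℝ => ∑ i, (t * a i) ^ 2) (2 * ∑ i, a i ^ 2) 1 := by
  rw [Finset.mul_sum]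
  refine .fun_sum fun i _ => ((hasDerivAt_mul_const (a i)).fun_pow 2).congr_deriv ?_
  push_cast; ring

theorem hasDerivAt_column_penalty :
    HasDerivAt
      (fun t : ℝ => (∑ i, (t * a i) ^ 2 - 1) ^ 2 + ∑ i, (t * a i) ^ 2 * (1 - t * a i) ^ 2)
      (4 * (∑ i, a i ^ 2) * (∑ i, a i ^ 2 - 1)
        + ∑ i, 2 * a i ^ 2 * (1 - a i) * (1 - 2 * a i)) 1 := by
  refine (((hasDerivAt_sum_mul_sq a).sub_const 1 |>.fun_pow 2).fun_add
    (.fun_sum fun i _ => hasDerivAt_mul_sq_mul_one_sub_mul_sq (a i))).congr_deriv ?_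
  simp only [one_mul]; push_cast; ring

theorem column_penalty_radial_deriv_le :
    -(1 / 2) * (4 * (∑ i, a i ^ 2) * (∑ i, a i ^ 2 - 1)
      + ∑ i, 2 * a i ^ 2 * (1 - a i) * (1 - 2 * a i)) ≤ 17 / 8 * ∑ i, a i ^ 2 := by
  have hentries : -∑ i, a i ^ 2 * (1 - a i) * (1 - 2 * a i) ≤ (∑ i, a i ^ 2) / 8 := by
    rw [← Finset.sum_neg_distrib, Finset.sum_div]
    exact Finset.sum_le_sum fun i _ => neg_sq_mul_one_sub_mul_one_sub_two_mul_le (a i)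
  have htwo : ∑ i, 2 * a i ^ 2 * (1 - a i) * (1 - 2 * a i)
      = 2 * ∑ i, a i ^ 2 * (1 - a i) * (1 - 2 * a i) := by
    rw [Finset.mul_sum]; congr 1; ext i; ring
  rw [htwo]
  nlinarith [sq_nonneg (∑ i, a i ^ 2)]

end Column

theorem differentiable_Q (F R : ℕ) : Differentiable ℝ (Q F R) := by
  unfold Q; fun_prop

theorem hasDerivAt_Q_smul {F R : ℕ} (y : EuclideanSpace ℝ (Fin F × Fin R)) :
    HasDerivAt (fun t : ℝ => Q F R (t • y)) (-(1 / 2) * ∑ r : Fin R,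
      (4 * (∑ φ, y (φ, r) ^ 2) * (∑ φ, y (φ, r) ^ 2 - 1)
        + ∑ φ, 2 * y (φ, r) ^ 2 * (1 - y (φ, r)) * (1 - 2 * y (φ, r)))) 1 := by
  simp only [Q, PiLp.smul_apply, smul_eq_mul]
  exact .const_mul _ (.fun_sum fun r _ => hasDerivAt_column_penalty fun φ => y (φ, r))

theorem stmt_9_general (F R : ℕ)
    (y : EuclideanSpace ℝ (Fin F × Fin R)) :
    ⟪gradient (Q F R) y, y⟫ ≤ (17 / 8) * ‖y‖ ^ 2 := by
  rw [inner_gradient_left,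
    fderiv_apply_self_eq_of_hasDerivAt_smul (differentiable_Q F R y) (hasDerivAt_Q_smul y),
    EuclideanSpace.real_norm_sq_eq, Fintype.sum_prod_type_right, Finset.mul_sum, Finset.mul_sum]
  exact Finset.sum_le_sum fun r _ => column_penalty_radial_deriv_le fun φ => y (φ, r)

theorem stmt_9 (F R : ℕ) (hF : 0 < F) (hR : 0 < R)
    (y : EuclideanSpace ℝ (Fin F × Fin R)) :
    ⟪gradient (Q F R) y, y⟫ ≤ (17 / 8) * ‖y‖ ^ 2 :=
  stmt_9_general F R y
end

section
/- For any q > 0 and T > 0, the function y ↦ exp(𝓗_q(y)/T) is integrable over ℝ^{F×R}; hence it can be normalized to a probability density. -/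
open scoped BigOperators
open MeasureTheory

noncomputable def Hq (F R : ℕ) (W : Matrix (Fin F × Fin R) (Fin F × Fin R) ℝ)
    (b : EuclideanSpace ℝ (Fin F × Fin R)) (q : ℝ)
    (y : EuclideanSpace ℝ (Fin F × Fin R)) : ℝ :=
  ((1/2) * ∑ p : Fin F × Fin R, y p * W.mulVec y p + ∑ p : Fin F × Fin R, b p * y p)
    + q * Q F R y

/-! The penalty satisfies `q Q(y) ≤ q R / 2 - (q / 4R) ‖y‖⁴`, while the quadratic and linear
parts of `H` grow at most like `‖y‖²`. Completing the square, `𝓗_q(y) / T ≤ D - ‖y‖²` for some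
constant `D`, so `exp(𝓗_q / T)` is dominated by a multiple of the Gaussian `exp(-‖y‖²)`. -/

section Gaussian

variable {V : Type*} [NormedAddCommGroup V] [InnerProductSpace ℝ V] [FiniteDimensional ℝ V]
  [MeasurableSpace V] [BorelSpace V]

theorem integrable_exp_neg_sq_norm : Integrable (fun v : V => Real.exp (-‖v‖ ^ 2)) := by
  have h := (GaussianFourier.integrable_cexp_neg_mul_sq_norm_add (V := V) (b := 1) one_pos 0 0).norm
  simpa only [zero_mul, add_zero, neg_mul, one_mul, Complex.norm_exp, Complex.neg_re,
    ← Complex.ofReal_pow, Complex.ofReal_re] using h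

lemma mul_sub_mul_sq_le {B c : ℝ} (hc : 0 < c) (s : ℝ) : B * s - c * s ^ 2 ≤ B ^ 2 / (4 * c) := by
  rw [le_div_iff₀ (by positivity)]
  nlinarith [sq_nonneg (2 * c * s - B)]

theorem integrable_exp_of_le_quartic {f : V → ℝ} (hf : Continuous f) {A B c : ℝ} (hc : 0 < c)
    (hle : ∀ v, f v ≤ A + B * ‖v‖ ^ 2 - c * ‖v‖ ^ 4) :
    Integrable (fun v => Real.exp (f v)) := by
  set D := A + (B + 1) ^ 2 / (4 * c)
  refine (integrable_exp_neg_sq_norm.const_mul (Real.exp D)).mono'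
    (Real.continuous_exp.comp hf).aestronglyMeasurable (Filter.Eventually.of_forall fun v => ?_)
  rw [Real.norm_eq_abs, abs_of_pos (Real.exp_pos _), ← Real.exp_add, Real.exp_le_exp]
  have := mul_sub_mul_sq_le (B := B + 1) hc (‖v‖ ^ 2)
  linarith [hle v]

end Gaussian

lemma sum_mul_mulVec_le {n : Type*} [Fintype n] (W : Matrix n n ℝ) (y : n → ℝ) :
    ∑ p, y p * W.mulVec y p ≤ (∑ p, ∑ j, |W p j|) * ∑ p, y p ^ 2 := by
  have hS : ∀ p, y p ^ 2 ≤ ∑ p, y p ^ 2 := fun p =>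
    Finset.single_le_sum (fun i _ => sq_nonneg (y i)) (Finset.mem_univ p)
  calc ∑ p, y p * W.mulVec y p
      = ∑ p, ∑ j, W p j * (y p * y j) := by
        simp only [Matrix.mulVec, dotProduct, Finset.mul_sum]
        exact Finset.sum_congr rfl fun p _ => Finset.sum_congr rfl fun j _ => by ring
    _ ≤ ∑ p, ∑ j, |W p j| * ∑ i, y i ^ 2 := by
        refine Finset.sum_le_sum fun p _ => Finset.sum_le_sum fun j _ => ?_
        calc W p j * (y p * y j) ≤ |W p j| * |y p * y j| := by
              rw [← abs_mul]; exact le_abs_self _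
          _ ≤ |W p j| * ∑ i, y i ^ 2 := by
              gcongr
              rw [abs_mul]
              nlinarith [sq_nonneg (|y p| - |y j|), sq_abs (y p), sq_abs (y j), hS p, hS j]
    _ = (∑ p, ∑ j, |W p j|) * ∑ p, y p ^ 2 := by
        simp only [Finset.sum_mul]

lemma sum_mul_le_norm_mul_one_add_sq_div_two {n : Type*} [Fintype n] (b y : EuclideanSpace ℝ n) :
    ∑ p, b p * y p ≤ ‖b‖ * ((1 + ‖y‖ ^ 2) / 2) := by
  have hinner : ∑ p, b p * y p = inner ℝ b y := by simp [PiLp.inner_apply, mul_comm]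
  rw [hinner]
  refine (real_inner_le_norm b y).trans (mul_le_mul_of_nonneg_left ?_ (norm_nonneg b))
  nlinarith [sq_nonneg (‖y‖ - 1)]

/-- Each column `r` contributes at most `1/2 - S_r ^ 2 / 4`, where `S_r` is its squared norm;
then Cauchy–Schwarz over the `R` columns. -/
lemma Q_le (F R : ℕ) (hR : 0 < R) (y : EuclideanSpace ℝ (Fin F × Fin R)) :
    Q F R y ≤ (R : ℝ) / 2 - ‖y‖ ^ 4 / (4 * R) := by
  set S : Fin R → ℝ := fun r => ∑ φ : Fin F, y (φ, r) ^ 2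
  have hnorm : ‖y‖ ^ 2 = ∑ r, S r := by
    rw [EuclideanSpace.real_norm_sq_eq, Fintype.sum_prod_type, Finset.sum_comm]
  have hcol : Q F R y ≤ ∑ r, (1 / 2 - S r ^ 2 / 4) := by
    rw [Q, neg_mul, neg_le, ← Finset.sum_neg_distrib, Finset.mul_sum]
    gcongr with r
    have : 0 ≤ ∑ φ : Fin F, y (φ, r) ^ 2 * (1 - y (φ, r)) ^ 2 := by positivity
    nlinarith [sq_nonneg (S r - 2)]
  have hCS : (∑ r, S r) ^ 2 ≤ R * ∑ r, S r ^ 2 := by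
    simpa using sq_sum_le_card_mul_sum_sq (s := Finset.univ) (f := S)
  have hRpos : (0 : ℝ) < R := by exact_mod_cast hR
  rw [show ‖y‖ ^ 4 = (‖y‖ ^ 2) ^ 2 by ring, hnorm]
  calc Q F R y ≤ ∑ r, (1 / 2 - S r ^ 2 / 4) := hcol
    _ = R / 2 - (∑ r, S r ^ 2) / 4 := by
        rw [Finset.sum_sub_distrib, ← Finset.sum_div, ← Finset.sum_div]; simp
    _ ≤ R / 2 - (∑ r, S r) ^ 2 / (4 * R) := by
        refine sub_le_sub_left ?_ _
        rw [div_le_div_iff₀ (by positivity) (by norm_num)]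
        nlinarith

lemma Hq_le (F R : ℕ) (hR : 0 < R) (W : Matrix (Fin F × Fin R) (Fin F × Fin R) ℝ)
    (b : EuclideanSpace ℝ (Fin F × Fin R)) {q : ℝ} (hq : 0 ≤ q)
    (y : EuclideanSpace ℝ (Fin F × Fin R)) :
    Hq F R W b q y ≤ (‖b‖ / 2 + q * R / 2) + ((∑ p, ∑ j, |W p j|) / 2 + ‖b‖ / 2) * ‖y‖ ^ 2
      - q / (4 * R) * ‖y‖ ^ 4 := by
  have hquad := sum_mul_mulVec_le W y
  rw [← EuclideanSpace.real_norm_sq_eq] at hquad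
  have hlin := sum_mul_le_norm_mul_one_add_sq_div_two b y
  have hQ := mul_le_mul_of_nonneg_left (Q_le F R hR y) hq
  rw [Hq]
  linear_combination (1 / 2 : ℝ) * hquad + hlin + hQ

theorem stmt_12_general (F R : ℕ) (hR : 0 < R)
    (W : Matrix (Fin F × Fin R) (Fin F × Fin R) ℝ)
    (b : EuclideanSpace ℝ (Fin F × Fin R)) (q T : ℝ) (hq : 0 < q) (hT : 0 < T) :
    Integrable (fun y : EuclideanSpace ℝ (Fin F × Fin R) =>
      Real.exp (Hq F R W b q y / T)) volume := by
  have hcont : Continuous fun y : EuclideanSpace ℝ (Fin F × Fin R) => Hq F R W b q y / T := by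
    unfold Hq Q Matrix.mulVec dotProduct
    fun_prop
  set M := ∑ p, ∑ j, |W p j|
  have hR' : (0 : ℝ) < R := by exact_mod_cast hR
  refine integrable_exp_of_le_quartic hcont (A := (‖b‖ / 2 + q * R / 2) / T)
    (B := (M / 2 + ‖b‖ / 2) / T) (c := q / (4 * R) / T) (by positivity) fun y => ?_
  calc Hq F R W b q y / T
      ≤ ((‖b‖ / 2 + q * R / 2) + (M / 2 + ‖b‖ / 2) * ‖y‖ ^ 2 - q / (4 * R) * ‖y‖ ^ 4) / T :=
        div_le_div_of_nonneg_right (Hq_le F R hR W b hq.le y) hT.le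
    _ = _ := by ring

theorem stmt_12 (F R : ℕ) (hF : 0 < F) (hR : 0 < R)
    (W : Matrix (Fin F × Fin R) (Fin F × Fin R) ℝ) (hW : W.IsSymm)
    (b : EuclideanSpace ℝ (Fin F × Fin R)) (q T : ℝ) (hq : 0 < q) (hT : 0 < T) :
    Integrable (fun y : EuclideanSpace ℝ (Fin F × Fin R) =>
      Real.exp (Hq F R W b q y / T)) volume :=
  stmt_12_general F R hR W b q T hq hT
end

section
/- Let x* be a nondegenerate critical point of a smooth function Q : ℝ^N → ℝ with ∇Q(x*) = 0 and ∇²Q(x*) invertible, and let H : ℝ^N → ℝ be smooth. Then there exist q̄ > 0 and a neighborhood 𝒩 of x* such that for all q ≥ q̄ there is a critical point x_q ∈ 𝒩 of 𝓗_q = H + qQ satisfying x_q = x* - q⁻¹ [∇²Q(x*)]⁻¹ ∇H(x*) + O(q⁻²), i.e., ‖x_q - x* + q⁻¹[∇²Q(x*)]⁻¹∇H(x*)‖ ≤ C q⁻² for some constant C and all q ≥ q̄. -/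
open InnerProductSpace Metric Set ContDiff

noncomputable section

set_option maxHeartbeats 2000000 in
theorem stmt_14 (N : ℕ) (hN : 0 < N)
    (Q H : EuclideanSpace ℝ (Fin N) → ℝ)
    (hQ : ContDiff ℝ (⊤ : ℕ∞) Q) (hH : ContDiff ℝ (⊤ : ℕ∞) H)
    (xstar : EuclideanSpace ℝ (Fin N))
    (hcrit : gradient Q xstar = 0)
    (A B : EuclideanSpace ℝ (Fin N) →L[ℝ] EuclideanSpace ℝ (Fin N))
    (hA : A = fderiv ℝ (gradient Q) xstar)
    (hBA : B.comp A = ContinuousLinearMap.id ℝ _)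
    (hAB : A.comp B = ContinuousLinearMap.id ℝ _) :
    ∃ qbar > (0:ℝ), ∃ C > (0:ℝ), ∃ 𝒩 ∈ nhds xstar, ∀ q ≥ qbar,
      ∃ xq ∈ 𝒩, gradient (fun y => H y + q * Q y) xq = 0 ∧
        ‖xq - xstar + q⁻¹ • B (gradient H xstar)‖ ≤ C * (q⁻¹) ^ 2 := by
  set g := gradient Q with hgdef
  set h := gradient H with hhdef
  have hone : (1 : WithTop ℕ∞) ≤ ∞ := by
    exact_mod_cast WithTop.coe_le_coe.2 (le_top (a := (1:ℕ∞)))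
  have gradsm : ∀ f : EuclideanSpace ℝ (Fin N) → ℝ, ContDiff ℝ (⊤ : ℕ∞) f →
      ContDiff ℝ ∞ (gradient f) := by
    intro f hf
    have : gradient f = fun x => (toDual ℝ (EuclideanSpace ℝ (Fin N))).symm (fderiv ℝ f x) := rfl
    rw [this]
    exact (toDual ℝ _).symm.contDiff.comp ((hf.of_le (by simp)).fderiv_right le_rfl)
  have hg : ContDiff ℝ ∞ g := gradsm Q hQ
  have hh : ContDiff ℝ ∞ h := gradsm H hH
  set c := h xstar with hcdef
  -- the map F
  set F : ℝ × EuclideanSpace ℝ (Fin N) → ℝ × EuclideanSpace ℝ (Fin N) :=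
    fun p => (p.1, g p.2 + p.1 • h p.2) with hFdef
  have hFsm : ContDiff ℝ ∞ F :=
    contDiff_fst.prodMk ((hg.comp contDiff_snd).add (contDiff_fst.smul (hh.comp contDiff_snd)))
  -- the derivative T
  have hBAx : ∀ x, B (A x) = x := fun x => by
    have := DFunLike.congr_fun hBA x; simpa using this
  have hABx : ∀ x, A (B x) = x := fun x => by
    have := DFunLike.congr_fun hAB x; simpa using this
  set Aeq := ContinuousLinearEquiv.equivOfInverse A B hBAx hABx with hAeq
  set V := (ContinuousLinearEquiv.refl ℝ ℝ).prodCongr Aeq with hV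
  set U := ContinuousLinearEquiv.equivOfInverse
    ((ContinuousLinearMap.fst ℝ ℝ (EuclideanSpace ℝ (Fin N))).prod
      (ContinuousLinearMap.snd ℝ ℝ _ + (ContinuousLinearMap.fst ℝ ℝ _).smulRight c))
    ((ContinuousLinearMap.fst ℝ ℝ (EuclideanSpace ℝ (Fin N))).prod
      (ContinuousLinearMap.snd ℝ ℝ _ - (ContinuousLinearMap.fst ℝ ℝ _).smulRight c))
    (fun p => by ext <;> simp) (fun p => by ext <;> simp) with hU
  set T := V.trans U with hT
  have hgdiff : Differentiable ℝ g := hg.differentiable (by simp)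
  have hhdiff : Differentiable ℝ h := hh.differentiable (by simp)
  have hgA : HasFDerivAt g A xstar := by
    rw [hA, hgdef]; exact (hgdiff xstar).hasFDerivAt
  have hFderiv : HasFDerivAt F
      (T : (ℝ × EuclideanSpace ℝ (Fin N)) →L[ℝ] (ℝ × EuclideanSpace ℝ (Fin N))) (0, xstar) := by
    have h1 : HasFDerivAt (fun p : ℝ × EuclideanSpace ℝ (Fin N) => g p.2)
        (A.comp (ContinuousLinearMap.snd ℝ ℝ _)) (0, xstar) :=
      HasFDerivAt.comp (f := Prod.snd) ((0:ℝ), xstar) hgA hasFDerivAt_snd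
    have h2 : HasFDerivAt (fun p : ℝ × EuclideanSpace ℝ (Fin N) => p.1 • h p.2)
        ((ContinuousLinearMap.fst ℝ ℝ _).smulRight c) (0, xstar) := by
      have := (hasFDerivAt_fst (p := ((0:ℝ), xstar))).smul
        (((hhdiff xstar).hasFDerivAt).comp (f := Prod.snd) ((0:ℝ), xstar) (hasFDerivAt_snd))
      simp at this; exact this
    have h3 := (hasFDerivAt_fst (p := ((0:ℝ), xstar))).prodMk (h1.add h2)
    exact h3
  -- local inverse
  have hF0 : F (0, xstar) = (0, 0) := by
    simp [hFdef, ← hgdef, hcrit]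
  have hFat : ContDiffAt ℝ ∞ F (0, xstar) := hFsm.contDiffAt
  set Φ := hFat.localInverse hFderiv (by simp) with hΦdef
  have hΦx : Φ (0, 0) = (0, xstar) := by
    rw [← hF0]; exact hFat.localInverse_apply_image hFderiv (by simp)
  have hΦsm : ContDiffAt ℝ ∞ Φ (0, 0) := by
    rw [← hF0]; exact hFat.to_localInverse hFderiv (by simp)
  have hstrict := hFat.hasStrictFDerivAt' hFderiv (by simp)
  have hΦderiv : HasFDerivAt Φ
      (T.symm : (ℝ × EuclideanSpace ℝ (Fin N)) →L[ℝ] (ℝ × EuclideanSpace ℝ (Fin N))) (0, 0) := by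
    rw [← hF0]
    exact hstrict.to_localInverse.hasFDerivAt
  have hrinv : ∀ᶠ y in nhds ((0:ℝ), (0:EuclideanSpace ℝ (Fin N))), F (Φ y) = y := by
    rw [← hF0]
    exact hstrict.eventually_right_inverse
  -- the curve of critical points
  set φ : ℝ → EuclideanSpace ℝ (Fin N) := fun t => (Φ (t, 0)).2 with hφdef
  have hφ0 : φ 0 = xstar := by
    show (Φ (0, 0)).2 = xstar
    rw [hΦx]
  have hι : ContDiff ℝ ∞ (fun t : ℝ => (t, (0 : EuclideanSpace ℝ (Fin N)))) :=
    contDiff_id.prodMk contDiff_const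
  have hφsm : ContDiffAt ℝ ∞ φ 0 := (hΦsm.comp (0:ℝ) hι.contDiffAt).snd
  have hιD : HasFDerivAt (fun t : ℝ => (t, (0 : EuclideanSpace ℝ (Fin N))))
      ((ContinuousLinearMap.id ℝ ℝ).prod 0) 0 :=
    (hasFDerivAt_id (0:ℝ)).prodMk (hasFDerivAt_const 0 0)
  have hφD : HasFDerivAt φ ((1 : ℝ →L[ℝ] ℝ).smulRight (-(B c))) 0 := by
    have h4 := (hΦderiv.comp (0:ℝ) hιD).snd
    refine h4.congr_fderiv ?_
    refine ContinuousLinearMap.ext_ring ?_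
    simp [hT, hV, hU, hAeq, ContinuousLinearEquiv.prodCongr_symm, ContinuousLinearEquiv.prodCongr_apply,
      ContinuousLinearEquiv.symm_equivOfInverse, ContinuousLinearEquiv.equivOfInverse_apply,
      map_neg]
  -- the equation satisfied near 0
  have heq : ∀ᶠ t in nhds (0:ℝ), g (φ t) + t • h (φ t) = 0 := by
    have hcont : Filter.Tendsto (fun t : ℝ => (t, (0 : EuclideanSpace ℝ (Fin N))))
        (nhds 0) (nhds (0, 0)) := by
      have := (hι.continuous).tendsto (0:ℝ)
      simpa using this
    filter_upwards [hcont.eventually hrinv] with t ht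
    have h1 : (Φ (t, 0)).1 = t := congrArg Prod.fst ht
    have h2 : g ((Φ (t, 0)).2) + (Φ (t, 0)).1 • h ((Φ (t, 0)).2) = 0 := congrArg Prod.snd ht
    rw [h1] at h2
    exact h2
  obtain ⟨w, hw, hweq⟩ := heq.exists_mem
  -- C^2 on a neighborhood
  have h2le : ((2:ℕ) : WithTop ℕ∞) ≤ ∞ := WithTop.coe_le_coe.2 le_top
  obtain ⟨u, hu, hφu2⟩ := hφsm.contDiffOn (m := (2:ℕ)) h2le (by
    intro hcon
    exact absurd hcon (by
      intro hcon'
      exact absurd (WithTop.coe_injective hcon') (by decide)))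
  set s := interior (u ∩ w) with hs
  have hso : IsOpen s := isOpen_interior
  have hs0 : (0:ℝ) ∈ s := mem_interior_iff_mem_nhds.2 (Filter.inter_mem hu hw)
  have hsu : s ⊆ u := interior_subset.trans inter_subset_left
  have hsw : s ⊆ w := interior_subset.trans inter_subset_right
  have hφs : ContDiffOn ℝ 2 φ s := hφu2.mono hsu
  obtain ⟨r0, hr0, hball⟩ := Metric.isOpen_iff.1 hso 0 hs0
  set r := r0 / 3 with hrdef
  have hrpos : (0:ℝ) < r := by positivity
  have hsub : closedBall (0:ℝ) (2*r) ⊆ ball (0:ℝ) r0 := by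
    intro x hx
    simp only [mem_closedBall, mem_ball, dist_zero_right] at hx ⊢
    calc ‖x‖ ≤ 2 * r := hx
      _ < r0 := by rw [hrdef]; linarith
  have hballs : ball (0:ℝ) r0 ⊆ s := hball
  set ψ := fderiv ℝ φ with hψ
  have hψs : ContDiffOn ℝ 1 ψ (ball (0:ℝ) r0) :=
    (hφs.mono hballs).fderiv_of_isOpen isOpen_ball (by norm_num)
  have hφdiff : ∀ x ∈ ball (0:ℝ) r0, DifferentiableAt ℝ φ x := fun x hx =>
    (((hφs.mono hballs)).contDiffAt (isOpen_ball.mem_nhds hx)).differentiableAt (by norm_num)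
  have hψdiff : ∀ x ∈ ball (0:ℝ) r0, DifferentiableAt ℝ ψ x := fun x hx =>
    ((hψs.contDiffAt (isOpen_ball.mem_nhds hx)).differentiableAt one_ne_zero)
  have hψcont : ContinuousOn (fderiv ℝ ψ) (ball (0:ℝ) r0) :=
    hψs.continuousOn_fderiv_of_isOpen isOpen_ball le_rfl
  obtain ⟨M0, hM0⟩ := (isCompact_closedBall (0:ℝ) (2*r)).exists_bound_of_continuousOn
    (E := ℝ →L[ℝ] ℝ →L[ℝ] EuclideanSpace ℝ (Fin N)) (f := fderiv ℝ ψ) ((hψcont.mono hsub))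
  set M := max M0 0 with hM
  have hMnn : (0:ℝ) ≤ M := le_max_right _ _
  have hψlip : ∀ t ∈ closedBall (0:ℝ) (2*r), ‖ψ t - ψ 0‖ ≤ M * ‖t‖ := by
    intro t ht
    have h0m : (0:ℝ) ∈ closedBall (0:ℝ) (2*r) := by
      simp [mem_closedBall]; positivity
    have := Convex.norm_image_sub_le_of_norm_fderiv_le (C := M)
      (fun x hx => hψdiff x (hsub hx))
      (fun x hx => le_trans (hM0 x hx) (le_max_left M0 0))
      (convex_closedBall _ _) h0m ht
    simpa using this
  have hψ0 : ψ 0 = (1 : ℝ →L[ℝ] ℝ).smulRight (-(B c)) := hφD.fderiv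
  set χ : ℝ → EuclideanSpace ℝ (Fin N) := fun t => φ t - xstar + t • (B c) with hχ
  have hχD : ∀ x ∈ ball (0:ℝ) r0, HasFDerivAt χ (ψ x - ψ 0) x := by
    intro x hx
    have h5 : HasFDerivAt φ (ψ x) x := (hφdiff x hx).hasFDerivAt
    have h6 : HasFDerivAt (fun t:ℝ => t • (B c)) ((1 : ℝ →L[ℝ] ℝ).smulRight (B c)) x := by
      exact (hasFDerivAt_id x).smul_const (B c)
    have h7 := (h5.sub_const xstar).add h6
    refine h7.congr_fderiv ?_
    rw [hψ0]
    ext t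
    simp
  have hχ0 : χ 0 = 0 := by simp [hχ, hφ0]
  -- final assembly
  refine ⟨max r⁻¹ 1, lt_of_lt_of_le one_pos (le_max_right _ _), M + 1, by positivity,
    univ, Filter.univ_mem, ?_⟩
  intro q hq
  have hq1 : (1:ℝ) ≤ q := le_trans (le_max_right _ _) hq
  have hqpos : (0:ℝ) < q := lt_of_lt_of_le one_pos hq1
  set ε := q⁻¹ with hεdef
  have hεpos : 0 < ε := by positivity
  have hεr : ε ≤ r := by
    have h8 : r⁻¹ ≤ q := le_trans (le_max_left _ _) hq
    calc ε = q⁻¹ := rfl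
      _ ≤ (r⁻¹)⁻¹ := by
          apply inv_anti₀ (by positivity) h8
      _ = r := inv_inv r
  have hεcb : ε ∈ closedBall (0:ℝ) (2*r) := by
    simp only [mem_closedBall, dist_zero_right, Real.norm_eq_abs, abs_of_pos hεpos]
    linarith
  have hεball : ε ∈ ball (0:ℝ) r0 := hsub hεcb
  have heqε : g (φ ε) + ε • h (φ ε) = 0 := hweq ε (hsw (hballs hεball))
  refine ⟨φ ε, mem_univ _, ?_, ?_⟩
  · -- critical point
    have hHd : DifferentiableAt ℝ H (φ ε) := (hH.differentiable (by simp)) (φ ε)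
    have hQd : DifferentiableAt ℝ Q (φ ε) := (hQ.differentiable (by simp)) (φ ε)
    have hsum : HasFDerivAt (fun y => H y + q * Q y)
        (fderiv ℝ H (φ ε) + q • fderiv ℝ Q (φ ε)) (φ ε) :=
      (hHd.hasFDerivAt).add ((hQd.hasFDerivAt).const_mul q)
    have key : gradient (fun y => H y + q * Q y) (φ ε) = h (φ ε) + q • g (φ ε) := by
      show (toDual ℝ _).symm (fderiv ℝ (fun y => H y + q * Q y) (φ ε)) = _
      rw [hsum.fderiv, map_add, map_smul]
      rfl
    rw [key]
    have h8 := congrArg (fun v : EuclideanSpace ℝ (Fin N) => q • v) heqε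
    simp only [smul_add, smul_smul, smul_zero] at h8
    rw [hεdef, mul_inv_cancel₀ hqpos.ne', one_smul] at h8
    rw [add_comm] at h8
    exact h8
  · -- Taylor bound
    have hIcc : Icc (0:ℝ) ε ⊆ closedBall (0:ℝ) (2*r) := by
      intro x hx
      simp only [mem_closedBall, dist_zero_right, Real.norm_eq_abs]
      rw [abs_of_nonneg hx.1]
      linarith [hx.2]
    have hχbound : ∀ x ∈ Icc (0:ℝ) ε, ‖fderiv ℝ χ x‖ ≤ M * ε := by
      intro x hx
      have hxcb := hIcc hx
      have hxball : x ∈ ball (0:ℝ) r0 := hsub hxcb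
      rw [(hχD x hxball).fderiv]
      calc ‖ψ x - ψ 0‖ ≤ M * ‖x‖ := hψlip x hxcb
        _ ≤ M * ε := by
            apply mul_le_mul_of_nonneg_left _ hMnn
            rw [Real.norm_eq_abs, abs_of_nonneg hx.1]
            exact hx.2
    have hχdiff : ∀ x ∈ Icc (0:ℝ) ε, DifferentiableAt ℝ χ x := fun x hx =>
      (hχD x (hsub (hIcc hx))).differentiableAt
    have hmvt := Convex.norm_image_sub_le_of_norm_fderiv_le hχdiff hχbound (convex_Icc 0 ε)
      (left_mem_Icc.2 hεpos.le) (right_mem_Icc.2 hεpos.le)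
    rw [hχ0, sub_zero, sub_zero] at hmvt
    have : ‖χ ε‖ ≤ M * ε * ε := by
      calc ‖χ ε‖ ≤ M * ε * ‖ε‖ := hmvt
        _ = M * ε * ε := by rw [Real.norm_eq_abs, abs_of_pos hεpos]
    calc ‖φ ε - xstar + ε • B c‖ = ‖χ ε‖ := rfl
      _ ≤ M * ε * ε := this
      _ ≤ (M + 1) * ε ^ 2 := by nlinarith [sq_nonneg ε]

end
end
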